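/- arXiv:2409.17974 — 5 statements merged into one kernel-verified Lean document; each statement's English description precedes it below -/
import Mathlib

section
/- Let m > 0 and for x ≥ 0 define ζ(x) = m(1 - e^{-x}) + 1/n with n ∈ ℕ. Then for x ≥ log(1 + 1/n), (1/2)(m e^{-x} - m)(m e^{-x} - m - 1) + (1/2)ζ(x) + ζ(x)/(e^x - 1) - m ≥ (1/2) m^2 (1 - e^{-x})^2 ≥ 0. -/
/-! Writing `u = e^{-x}`, the identity `(1 - u) / (e^x - 1) = u` makes the terms linear in `m`
cancel, so the left-hand side equals `(1/2) m² (1 - u)² + 1/(2n) + 1/(n (e^x - 1))`.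
Since `x ≥ log (1 + 1/n) > 0`, the last two terms are nonnegative. -/

open Real

lemma one_sub_exp_neg_div_exp_sub_one {x : ℝ} (hx : x ≠ 0) :
    (1 - exp (-x)) / (exp x - 1) = exp (-x) := by
  have hE : exp x - 1 ≠ 0 := sub_ne_zero.mpr (mt (exp_eq_one_iff x).mp hx)
  rw [div_eq_iff hE, mul_sub, mul_one, ← exp_add, neg_add_cancel, exp_zero]

lemma supersolution_defect_eq (m c : ℝ) {x : ℝ} (hx : x ≠ 0) :
    (1/2) * (m * exp (-x) - m) * (m * exp (-x) - m - 1)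
      + (1/2) * (m * (1 - exp (-x)) + c) + (m * (1 - exp (-x)) + c) / (exp x - 1) - m
    = (1/2) * m^2 * (1 - exp (-x))^2 + c / 2 + c / (exp x - 1) := by
  have h := one_sub_exp_neg_div_exp_sub_one hx
  rw [add_div, mul_div_assoc, h]
  ring

theorem stmt_9_general (m : ℝ) (n : ℕ) (hn : 0 < n)
    (x : ℝ) (hx : Real.log (1 + 1/n) ≤ x) :
    (1/2) * (m * Real.exp (-x) - m) * (m * Real.exp (-x) - m - 1)
      + (1/2) * (m * (1 - Real.exp (-x)) + 1/n)
      + (m * (1 - Real.exp (-x)) + 1/n) / (Real.exp x - 1) - m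
    ≥ (1/2) * m^2 * (1 - Real.exp (-x))^2 ∧
    (1/2) * m^2 * (1 - Real.exp (-x))^2 ≥ 0 := by
  have hx0 : 0 < x := (log_pos (lt_add_of_pos_right 1 (by positivity))).trans_le hx
  have hE : 0 < exp x - 1 := sub_pos.mpr (one_lt_exp_iff.mpr hx0)
  rw [supersolution_defect_eq m _ hx0.ne']
  constructor
  · have : 0 ≤ (1 / n : ℝ) / 2 + 1 / n / (exp x - 1) := by positivity
    linarith
  · positivity

theorem stmt_9 (m : ℝ) (hm : 0 < m) (n : ℕ) (hn : 0 < n)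
    (x : ℝ) (hx : Real.log (1 + 1/n) ≤ x) :
    (1/2) * (m * Real.exp (-x) - m) * (m * Real.exp (-x) - m - 1)
      + (1/2) * (m * (1 - Real.exp (-x)) + 1/n)
      + (m * (1 - Real.exp (-x)) + 1/n) / (Real.exp x - 1) - m
    ≥ (1/2) * m^2 * (1 - Real.exp (-x))^2 ∧
    (1/2) * m^2 * (1 - Real.exp (-x))^2 ≥ 0 :=
  stmt_9_general m n hn x hx
end

section
/- For m > 0, n ∈ ℕ, and 0 ≤ x ≤ log(1 + 1/n), with ζ(x) = m(1 - e^{-x}) + 1/n and θ_n(x) = 1/n, one has (1/2)(m e^{-x} - m)(m e^{-x} - m - 1) + (1/2)ζ(x) + n·ζ(x) - m ≥ 1 - m. -/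
theorem stmt_10 (m : ℝ) (hm : 0 < m) (n : ℕ) (hn : 0 < n)
    (x : ℝ) (hx : x ∈ Set.Icc (0:ℝ) (Real.log (1 + 1/n))) :
    (1/2) * (m * Real.exp (-x) - m) * (m * Real.exp (-x) - m - 1)
      + (1/2) * (m * (1 - Real.exp (-x)) + 1/n)
      + n * (m * (1 - Real.exp (-x)) + 1/n) - m
    ≥ 1 - m := by
  obtain ⟨hx0, -⟩ := hx
  have he : Real.exp (-x) ≤ 1 := Real.exp_le_one_iff.mpr (by linarith)
  have hnn : (0:ℝ) < n := by exact_mod_cast hn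
  have hnpos : (0:ℝ) < 1/n := by positivity
  have hu : 0 ≤ 1 - Real.exp (-x) := by linarith
  have : (n:ℝ) * (1/n) = 1 := by field_simp
  nlinarith [mul_nonneg hm.le hu, mul_nonneg (mul_nonneg hm.le hu) (mul_nonneg hm.le hu), mul_nonneg hnn.le (mul_nonneg hm.le hu)]
end

section
/- Fix m ≥ 1. If a sequence ρ̃ : ℕ → [0,∞) satisfies the recursion ρ̃(l) = 2m(1-m)/((2m+1)l + 1) + (1/((2m+1)l + 1))·(Σ_{i=1}^{l-1} i(l-i) ρ̃(i) ρ̃(l-i) - 2 Σ_{i=1}^{l-1} ρ̃(i)) for all l ≥ 1, and Σ_{l≥1} l ρ̃(l) = m, then a contradiction follows: if m > 1 then ρ̃(1) = m(1-m)/(m+1) < 0, and if m = 1 then ρ̃(l) = 0 for all l, contradicting Σ l ρ̃(l) = 1. -/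
/-! At `l = 1` both sums are empty, so the recursion reads `ρ 1 = m (1 - m) / (m + 1)`, which is
negative once `m > 1`. For `m = 1` the constant term vanishes, so by strong induction every `ρ l`
with `l ≥ 1` is zero and the total mass is `0`, not `1`. -/

open Finset

lemma eq_zero_of_forall_eq_mul_sums (c ρ : ℕ → ℝ)
    (h : ∀ l, 1 ≤ l → ρ l = c l *
      ((∑ i ∈ Ico 1 l, (i : ℝ) * ((l : ℝ) - i) * ρ i * ρ (l - i)) - 2 * ∑ i ∈ Ico 1 l, ρ i)) :
    ∀ l, 1 ≤ l → ρ l = 0 := by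
  intro l
  induction l using Nat.strong_induction_on with
  | _ l ih =>
    intro hl
    have hρ : ∀ i ∈ Ico 1 l, ρ i = 0 := fun i hi => ih i (mem_Ico.1 hi).2 (mem_Ico.1 hi).1
    rw [h l hl, sum_eq_zero fun i hi => by rw [hρ i hi, mul_zero, zero_mul], sum_eq_zero hρ]
    ring

theorem stmt_15 (m : ℝ) (hm : 1 ≤ m) (ρ : ℕ → ℝ)
    (hpos : ∀ l : ℕ, 1 ≤ l → 0 ≤ ρ l)
    (hrec : ∀ l : ℕ, 1 ≤ l →
      ρ l = 2*m*(1-m) / ((2*m+1)*l + 1)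
        + (1 / ((2*m+1)*l + 1)) *
          ((∑ i ∈ Finset.Ico 1 l, (i:ℝ) * ((l:ℝ) - i) * ρ i * ρ (l-i))
            - 2 * ∑ i ∈ Finset.Ico 1 l, ρ i))
    (hmass : HasSum (fun l : ℕ => ((l+1 : ℕ) : ℝ) * ρ (l+1)) m) :
    False := by
  rcases hm.eq_or_lt with rfl | hgt
  · have hzero : ∀ l, 1 ≤ l → ρ l = 0 :=
      eq_zero_of_forall_eq_mul_sums (fun l => 1 / ((2 * 1 + 1) * l + 1)) ρ fun l hl => by
        simp [hrec l hl]
    have hmass_zero : HasSum (fun l : ℕ => ((l+1 : ℕ) : ℝ) * ρ (l+1)) 0 := by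
      simp [hzero _ (Nat.le_add_left 1 _), hasSum_zero]
    exact one_ne_zero (hmass.unique hmass_zero)
  · have hρ₁ : ρ 1 = m * (1 - m) / (m + 1) := by
      rw [hrec 1 le_rfl, Ico_self, sum_empty, sum_empty]
      field_simp
      ring
    have hneg : m * (1 - m) / (m + 1) < 0 :=
      div_neg_of_neg_of_pos (mul_neg_of_pos_of_neg (by linarith) (by linarith)) (by linarith)
    linarith [hpos 1 le_rfl]
end

section
/- If m = 1, the unique function G̃ : [0,1] → ℝ satisfying (1/2)(z G̃'(z) + 1)(z G̃'(z) + 2) + ((1+z)/(2(1-z))) G̃(z) - 1 = 0 on (0,1) together with 0 ≤ G̃(z) ≤ 1 - z, is G̃ ≡ 0. -/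
/-!
Writing `p = z G'(z)`, the equation reads `(1 + z) G + (1 - z)(p² + 3p) = 0`. Since `G ≥ 0` and
`(1 + z)/(1 - z) ≥ 1`, this forces `G + 3 z G' ≤ 0`, which is exactly the statement that
`z G(z)³` (with derivative `G² (G + 3 z G')`) is nonincreasing. It vanishes at `z = 0` and is
nonnegative, so it vanishes identically; hence `G = 0` on `(0, 1]`, and at `0` by continuity.
-/

open Set

lemma add_three_mul_nonpos_of_eq {z g p : ℝ} (hz : z ∈ Ioo (0 : ℝ) 1) (hg : 0 ≤ g)
    (h : (1/2) * (p + 1) * (p + 2) + ((1 + z) / (2 * (1 - z))) * g - 1 = 0) :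
    g + 3 * p ≤ 0 := by
  obtain ⟨hz0, hz1⟩ := hz
  have h1z : 0 < 1 - z := by linarith
  have hcleared : (1 + z) * g + (1 - z) * (p ^ 2 + 3 * p) = 0 := by
    field_simp at h
    linarith
  nlinarith [mul_nonneg h1z.le (sq_nonneg p), mul_nonneg hz0.le hg]

lemma antitoneOn_mul_pow_three {G : ℝ → ℝ} {a b : ℝ}
    (hcont : ContinuousOn G (Icc a b)) (hdiff : DifferentiableOn ℝ G (Ioo a b))
    (hG : ∀ x ∈ Ioo a b, G x + 3 * (x * deriv G x) ≤ 0) :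
    AntitoneOn (fun x => x * G x ^ 3) (Icc a b) := by
  have hderiv : ∀ x ∈ Ioo a b,
      HasDerivAt (fun x => x * G x ^ 3) (G x ^ 2 * (G x + 3 * (x * deriv G x))) x := by
    intro x hx
    have hGx := (hdiff x hx).differentiableAt (isOpen_Ioo.mem_nhds hx)
    refine ((hasDerivAt_id' x).mul (hGx.hasDerivAt.pow 3)).congr_deriv ?_
    norm_num
    ring
  apply antitoneOn_of_deriv_nonpos (convex_Icc a b) (by fun_prop)
  · rw [interior_Icc]
    exact fun x hx => (hderiv x hx).differentiableAt.differentiableWithinAt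
  · rw [interior_Icc]
    intro x hx
    rw [(hderiv x hx).deriv]
    exact mul_nonpos_of_nonneg_of_nonpos (sq_nonneg _) (hG x hx)

lemma eqOn_zero_of_antitoneOn_mul_pow_three {G : ℝ → ℝ} {b : ℝ}
    (hanti : AntitoneOn (fun x => x * G x ^ 3) (Icc 0 b)) (hG : ∀ x ∈ Icc 0 b, 0 ≤ G x) :
    EqOn G 0 (Ioc 0 b) := by
  intro x hx
  have hx' : x ∈ Icc 0 b := Ioc_subset_Icc_self hx
  have hle : x * G x ^ 3 ≤ 0 := by
    simpa using hanti (left_mem_Icc.mpr (hx.1.le.trans hx.2)) hx' hx.1.le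
  have hcube : G x ^ 3 ≤ 0 := nonpos_of_mul_nonpos_right hle hx.1
  exact pow_eq_zero_iff three_ne_zero |>.mp (le_antisymm hcube (pow_nonneg (hG x hx') 3))

theorem stmt_16 (G : ℝ → ℝ)
    (hdiff : DifferentiableOn ℝ G (Set.Ioo (0:ℝ) 1))
    (hcont : ContinuousOn G (Set.Icc (0:ℝ) 1))
    (heq : ∀ z ∈ Set.Ioo (0:ℝ) 1,
      (1/2) * (z * deriv G z + 1) * (z * deriv G z + 2)
        + ((1+z) / (2*(1-z))) * G z - 1 = 0)
    (hbd : ∀ z ∈ Set.Icc (0:ℝ) 1, 0 ≤ G z ∧ G z ≤ 1 - z) :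
    ∀ z ∈ Set.Icc (0:ℝ) 1, G z = 0 := by
  have hnonneg : ∀ z ∈ Icc (0 : ℝ) 1, 0 ≤ G z := fun z hz => (hbd z hz).1
  have hkey : ∀ z ∈ Ioo (0 : ℝ) 1, G z + 3 * (z * deriv G z) ≤ 0 := fun z hz =>
    add_three_mul_nonpos_of_eq hz (hnonneg z (Ioo_subset_Icc_self hz)) (heq z hz)
  have hzero : EqOn G 0 (Ioc 0 1) := eqOn_zero_of_antitoneOn_mul_pow_three
    (antitoneOn_mul_pow_three hcont hdiff hkey) hnonneg
  have hclosure : Icc (0 : ℝ) 1 ⊆ closure (Ioc 0 1) := (closure_Ioc zero_ne_one).ge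
  exact hzero.of_subset_closure hcont continuousOn_const Ioc_subset_Icc_self hclosure
end

section
/- Let G(z) = Σ_{l≥1}(1 - z^l) ρ(l) with ρ(l) ≥ 0 and Σ_{l≥1} l ρ(l) = m < ∞. Suppose G satisfies on (0,1): (1/2)(zG'(z) + m)(zG'(z) + m + 1) + ((1+z)/(2(1-z))) G(z) - m = 0. Then for every l ≥ 1, the coefficients satisfy Σ_{i=l}^∞ ρ(i) + (1/2) Σ_{i=1}^{l-1} i(l-i) ρ(i) ρ(l-i) - ((m + 1/2) l + 1/2) ρ(l) = 0. -/
/-!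
With `Q(z) = ∑ ρₗ zˡ` we have `G = Q(1) - Q` and `P := -z G' = ∑ l ρₗ zˡ`, while telescoping gives
`G(z) / (1 - z) = ∑ₙ (∑_{i > n} ρᵢ) zⁿ`. Twice the equation therefore says that an explicit power
series, whose coefficients involve the Cauchy square of `l ρₗ` and the tails of `ρ`, is constant on
`(0, 1)`. By the identity theorem its coefficients of positive degree vanish, and half of the
`l`-th one is the claimed expression, since `∑_{i ≥ l} ρᵢ = ρₗ + ∑_{i > l} ρᵢ`.
-/

open Filter Set Finset Topology Asymptotics
open scoped NNReal

theorem hasSum_mul_pow_of_hasSum_succ {R : Type*} [CommRing R] [TopologicalSpace R]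
    [IsTopologicalRing R] {f : ℕ → R} {z a : R}
    (h : HasSum (fun n => f (n + 1) * z ^ n) a) :
    HasSum (fun n => f n * z ^ n) (f 0 + z * a) := by
  refine (hasSum_nat_add_iff' 1).mp ?_
  rw [sum_range_one, pow_zero, mul_one, add_sub_cancel_left]
  have hshift : (fun n => f (n + 1) * z ^ (n + 1)) = fun n => z * (f (n + 1) * z ^ n) := by
    ext n; ring
  exact hshift ▸ h.mul_left z

theorem tsum_nat_add_eq_add_tsum_nat_add_succ {G : Type*} [AddCommGroup G] [TopologicalSpace G]
    [IsTopologicalAddGroup G] [T2Space G] {ρ : ℕ → G} (hρ : Summable ρ) (n : ℕ) :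
    ∑' i, ρ (i + n) = ρ n + ∑' i, ρ (i + (n + 1)) := by
  rw [((summable_nat_add_iff n).2 hρ).tsum_eq_zero_add, zero_add]
  simp only [add_right_comm _ 1 n, add_assoc]

section NormedField

variable {𝕜 : Type*} [NormedField 𝕜] [CompleteSpace 𝕜]

theorem hasSum_sum_range_mul_mul_pow {p : ℕ → 𝕜} {z : 𝕜}
    (hp : Summable fun n => ‖p n * z ^ n‖) :
    HasSum (fun n => (∑ k ∈ range (n + 1), p k * p (n - k)) * z ^ n)
      ((∑' n, p n * z ^ n) ^ 2) := by
  have hterm : ∀ n, (∑ k ∈ range (n + 1), p k * p (n - k)) * z ^ n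
      = ∑ k ∈ range (n + 1), p k * z ^ k * (p (n - k) * z ^ (n - k)) := by
    intro n
    rw [sum_mul]
    refine sum_congr rfl fun k hk => ?_
    have hpow : z ^ k * z ^ (n - k) = z ^ n := by
      rw [← pow_add, Nat.add_sub_cancel' (Nat.lt_succ_iff.mp (mem_range.mp hk))]
    rw [← hpow]
    ring
  have h := hasSum_sum_range_mul_of_summable_norm hp hp
  simp_rw [← hterm, ← sq] at h
  exact h

theorem hasSum_tsum_nat_add_succ_mul_pow {ρ : ℕ → 𝕜} (hρ : Summable ρ) {z : 𝕜} (hz : ‖z‖ < 1) :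
    HasSum (fun n => (∑' i, ρ (i + (n + 1))) * z ^ n)
      ((∑' n, ρ n - ∑' n, ρ n * z ^ n) / (1 - z)) := by
  have hsum : Summable fun n => (∑' i, ρ (i + (n + 1))) * z ^ n := by
    refine summable_of_isBigO_nat (summable_norm_geometric_of_norm_lt_one hz) ?_
    have hbdd := ((tendsto_sum_nat_add ρ).comp (tendsto_add_atTop_nat 1)).isBigO_one ℝ
    simpa using hbdd.mul (isBigO_norm_right.2 (isBigO_refl (fun n => z ^ n) atTop))
  have htel : (fun n => (∑' i, ρ (i + n)) * z ^ n - (∑' i, ρ (i + (n + 1))) * z ^ n)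
      = fun n => ρ n * z ^ n := by
    ext n
    rw [tsum_nat_add_eq_add_tsum_nat_add_succ hρ n]
    ring
  have hdiff := (hasSum_mul_pow_of_hasSum_succ (f := fun k => ∑' i, ρ (i + k)) hsum.hasSum).sub
    hsum.hasSum
  rw [htel] at hdiff
  have hz1 : 1 - z ≠ 0 := sub_ne_zero.2 fun h => by simp [← h] at hz
  convert hsum.hasSum using 1
  rw [hdiff.tsum_eq]
  simp only [add_zero]
  field_simp
  ring

end NormedField

theorem hasDerivAt_tsum_mul_pow {c : ℕ → ℝ} (hc : Summable fun n : ℕ => ‖(n : ℝ) * c n‖) {y : ℝ}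
    (hy : |y| < 1) :
    HasDerivAt (fun x => ∑' n, c n * x ^ n) (∑' n : ℕ, n * c n * y ^ (n - 1)) y := by
  refine hasDerivAt_tsum_of_isPreconnected (t := Ioo (-1) 1) (y₀ := 0)
    (g := fun n x => c n * x ^ n) (g' := fun n x => n * c n * x ^ (n - 1)) hc isOpen_Ioo
    isPreconnected_Ioo (fun n x _ => ?_) (fun n x hx => ?_) (by simp) ?_ (abs_lt.mp hy)
  · simpa [mul_comm, mul_assoc, mul_left_comm] using (hasDerivAt_pow n x).const_mul (c n)
  · rw [norm_mul, norm_pow]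
    exact mul_le_of_le_one_right (norm_nonneg _)
      (pow_le_one₀ (norm_nonneg _) (abs_lt.mpr hx).le)
  · exact summable_of_ne_finset_zero (s := {0}) fun n hn => by simp_all

theorem mul_deriv_tsum_mul_pow {c : ℕ → ℝ} (hc : Summable fun n : ℕ => ‖(n : ℝ) * c n‖) {y : ℝ}
    (hy : |y| < 1) :
    y * deriv (fun x => ∑' n, c n * x ^ n) y = ∑' n : ℕ, n * c n * y ^ n := by
  rw [(hasDerivAt_tsum_mul_pow hc hy).deriv, ← tsum_mul_left]
  refine tsum_congr fun n => ?_
  rcases n with _ | n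
  · simp
  · rw [Nat.add_sub_cancel, pow_succ]
    ring

theorem eq_tsum_sub_tsum_mul_pow_of_hasSum {ρ : ℕ → ℝ} (hρ : Summable ρ) {z g : ℝ} (hz : |z| ≤ 1)
    (h : HasSum (fun l => (1 - z ^ (l + 1)) * ρ (l + 1)) g) :
    g = ∑' n, ρ n - ∑' n, ρ n * z ^ n := by
  have hQ : Summable fun n => ρ n * z ^ n := by
    refine hρ.norm.of_norm_bounded fun n => ?_
    rw [norm_mul, norm_pow]
    exact mul_le_of_le_one_right (norm_nonneg _) (pow_le_one₀ (norm_nonneg _) hz)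
  have h0 : HasSum (fun n => (1 - z ^ n) * ρ n) g := (hasSum_nat_add_iff' 1).mp (by simpa using h)
  rw [← hρ.tsum_sub hQ, ← h0.tsum_eq]
  exact tsum_congr fun n => by ring

theorem eq_zero_of_forall_hasSum_mul_pow_zero {c : ℕ → ℝ} {r : ℝ} (hr : 0 < r)
    (h : ∀ z ∈ Ioo 0 r, HasSum (fun n => c n * z ^ n) 0) (n : ℕ) : c n = 0 := by
  set p := FormalMultilinearSeries.ofScalars ℝ c
  have hrad : 0 < p.radius := by
    have hr2 : 0 < r / 2 := by positivity
    have hlim := (h (r / 2) ⟨hr2, by linarith⟩).summable.tendsto_atTop_zero.norm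
    refine (ENNReal.coe_pos.2 (NNReal.coe_pos.1 hr2 : (0 : ℝ≥0) < ⟨r / 2, hr2.le⟩)).trans_le
      (p.le_radius_of_tendsto (l := 0) ?_)
    rw [norm_zero] at hlim
    refine hlim.congr fun k => ?_
    rw [norm_mul, norm_pow, FormalMultilinearSeries.ofScalars_norm,
      Real.norm_of_nonneg hr2.le]
    rfl
  have hp : HasFPowerSeriesAt p.sum p 0 := (p.hasFPowerSeriesOnBall hrad).hasFPowerSeriesAt
  have hfreq : ∃ᶠ z in 𝓝[≠] (0 : ℝ), p.sum z = 0 := by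
    have hright : ∀ᶠ z in 𝓝[>] (0 : ℝ), p.sum z = 0 := by
      filter_upwards [Ioo_mem_nhdsGT hr] with z hz
      have hsum : p.sum z = ∑' n, c n • z ^ n := FormalMultilinearSeries.ofScalars_sum_eq c z
      rw [hsum]
      exact (h z hz).tsum_eq
    exact hright.frequently.filter_mono (nhdsWithin_mono _ fun z hz => hz.ne')
  have hp0 := hp.eq_zero_of_eventually (hp.analyticAt.frequently_zero_iff_eventually_zero.mp hfreq)
  rw [← FormalMultilinearSeries.ofScalars_eq_zero ℝ n]
  change p n = 0
  rw [hp0]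
  rfl

theorem eq_zero_of_forall_hasSum_mul_pow_const {c : ℕ → ℝ} {r C : ℝ} (hr : 0 < r)
    (h : ∀ z ∈ Ioo 0 r, HasSum (fun n => c n * z ^ n) C) {n : ℕ} (hn : n ≠ 0) : c n = 0 := by
  have hc := eq_zero_of_forall_hasSum_mul_pow_zero (c := Function.update c 0 (c 0 - C)) hr
    (fun z hz => ?_) n
  · rwa [Function.update_of_ne hn] at hc
  · have hu := (h z hz).update 0 ((c 0 - C) * z ^ 0)
    have hfun : Function.update (fun n => c n * z ^ n) 0 ((c 0 - C) * z ^ 0)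
        = fun n => Function.update c 0 (c 0 - C) n * z ^ n := by
      ext k
      rcases eq_or_ne k 0 with rfl | hk <;> simp [*]
    rwa [hfun, pow_zero, mul_one, mul_one, sub_sub_cancel_left, neg_add_cancel] at hu

theorem sum_range_succ_cast_mul_eq_sum_Ico (ρ : ℕ → ℝ) (l : ℕ) :
    ∑ k ∈ range (l + 1), (k : ℝ) * ρ k * (((l - k : ℕ) : ℝ) * ρ (l - k))
      = ∑ i ∈ Ico 1 l, (i : ℝ) * ((l : ℝ) - i) * ρ i * ρ (l - i) := by
  rw [sum_range_succ, Nat.sub_self, Nat.cast_zero, zero_mul, mul_zero, add_zero,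
    range_eq_Ico]
  rcases Nat.eq_zero_or_pos l with rfl | hl
  · simp
  rw [sum_eq_sum_Ico_succ_bot hl, Nat.cast_zero, zero_mul, zero_mul, zero_add]
  refine sum_congr rfl fun i hi => ?_
  rw [Nat.cast_sub (mem_Ico.mp hi).2.le]
  ring

-- Up to its constant term, the coefficient of `zⁿ` in `(m - P)(m - P + 1) + (1 + z) / (1 - z) * G`
-- with `P = -z G' = ∑ n ρₙ zⁿ`.
noncomputable def hjCoeff (m : ℝ) (ρ : ℕ → ℝ) (n : ℕ) : ℝ :=
  -(2 * m + 1) * (n * ρ n)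
    + ∑ k ∈ range (n + 1), (k : ℝ) * ρ k * (((n - k : ℕ) : ℝ) * ρ (n - k))
    + (∑' i, ρ (i + (n + 1)) + ∑' i, ρ (i + n))

theorem hasSum_hjCoeff_mul_pow (m : ℝ) {ρ : ℕ → ℝ} (hρ : Summable ρ)
    (hnρ : Summable fun n : ℕ => ‖(n : ℝ) * ρ n‖) {z : ℝ} (hz : |z| < 1) :
    HasSum (fun n => hjCoeff m ρ n * z ^ n)
      (-(2 * m + 1) * ∑' n : ℕ, n * ρ n * z ^ n + (∑' n : ℕ, n * ρ n * z ^ n) ^ 2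
        + (1 + z) / (1 - z) * (∑' n, ρ n - ∑' n, ρ n * z ^ n) + ∑' n, ρ n) := by
  have hPz : Summable fun n : ℕ => ‖(n : ℝ) * ρ n * z ^ n‖ := by
    refine hnρ.of_nonneg_of_le (fun _ => norm_nonneg _) fun n => ?_
    rw [norm_mul _ (z ^ n), norm_pow]
    exact mul_le_of_le_one_right (norm_nonneg _) (pow_le_one₀ (norm_nonneg _) hz.le)
  have hT := hasSum_tsum_nat_add_succ_mul_pow hρ hz
  have hsum := ((hPz.of_norm.hasSum.mul_left (-(2 * m + 1))).add
    (hasSum_sum_range_mul_mul_pow (p := fun n : ℕ => (n : ℝ) * ρ n) hPz)).add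
    (hT.add (hasSum_mul_pow_of_hasSum_succ (f := fun k => ∑' i, ρ (i + k)) hT))
  simp only [add_zero] at hsum
  refine (congrArg₂ HasSum (funext fun n => ?_) (by ring)).mp hsum
  rw [hjCoeff]
  ring

theorem stmt_18_general (m : ℝ) (G : ℝ → ℝ) (ρ : ℕ → ℝ)
    (hser : ∀ z ∈ Set.Icc (0:ℝ) 1,
      HasSum (fun l : ℕ => (1 - z^(l+1)) * ρ (l+1)) (G z))
    (hmass : HasSum (fun l : ℕ => ((l+1 : ℕ) : ℝ) * ρ (l+1)) m)
    (heq : ∀ z ∈ Set.Ioo (0:ℝ) 1,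
      (1/2) * (z * deriv G z + m) * (z * deriv G z + m + 1)
        + ((1+z) / (2*(1-z))) * G z - m = 0) :
    ∀ l : ℕ, 1 ≤ l →
      (∑' i : ℕ, ρ (i + l))
        + (1/2) * (∑ i ∈ Finset.Ico 1 l, (i:ℝ) * ((l:ℝ) - i) * ρ i * ρ (l-i))
        - ((m + 1/2) * l + 1/2) * ρ l = 0 := by
  have hρ : Summable ρ := (summable_nat_add_iff 1).1 <|
    (hser 0 ⟨le_rfl, zero_le_one⟩).summable.congr fun n => by simp
  have hnρ : Summable fun n : ℕ => ‖(n : ℝ) * ρ n‖ := (summable_nat_add_iff 1).1 hmass.summable.norm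
  have hG : ∀ z ∈ Icc (0 : ℝ) 1, G z = ∑' n, ρ n - ∑' n, ρ n * z ^ n := fun z hz =>
    eq_tsum_sub_tsum_mul_pow_of_hasSum hρ (abs_le.2 ⟨by linarith [hz.1], hz.2⟩) (hser z hz)
  have hcoeff : ∀ n ≠ 0, hjCoeff m ρ n = 0 := by
    refine fun n => eq_zero_of_forall_hasSum_mul_pow_const (C := m - m ^ 2 + ∑' n, ρ n) one_pos
      fun z hz => ?_
    have habs : |z| < 1 := abs_lt.2 ⟨by linarith [hz.1], hz.2⟩
    have hzG' : z * deriv G z = -∑' n : ℕ, n * ρ n * z ^ n := by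
      have hloc : G =ᶠ[𝓝 z] fun x => ∑' n, ρ n - ∑' n, ρ n * x ^ n :=
        eventually_of_mem (isOpen_Ioo.mem_nhds hz) fun x hx => hG x (Ioo_subset_Icc_self hx)
      rw [hloc.deriv_eq, deriv_const_sub, mul_neg, mul_deriv_tsum_mul_pow hnρ habs]
    convert hasSum_hjCoeff_mul_pow m hρ hnρ habs using 1
    have h := heq z hz
    rw [hzG', hG z (Ioo_subset_Icc_self hz)] at h
    have hz1 : 1 - z ≠ 0 := by linarith [hz.2]
    field_simp at h ⊢
    linear_combination -h
  intro l hl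
  have h := hcoeff l (by omega)
  rw [hjCoeff, sum_range_succ_cast_mul_eq_sum_Ico, tsum_nat_add_eq_add_tsum_nat_add_succ hρ l] at h
  rw [tsum_nat_add_eq_add_tsum_nat_add_succ hρ l]
  linear_combination (1 / 2) * h

theorem stmt_18 (m : ℝ) (G : ℝ → ℝ) (ρ : ℕ → ℝ)
    (hρ : ∀ l : ℕ, 1 ≤ l → 0 ≤ ρ l)
    (hser : ∀ z ∈ Set.Icc (0:ℝ) 1,
      HasSum (fun l : ℕ => (1 - z^(l+1)) * ρ (l+1)) (G z))
    (hmass : HasSum (fun l : ℕ => ((l+1 : ℕ) : ℝ) * ρ (l+1)) m)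
    (heq : ∀ z ∈ Set.Ioo (0:ℝ) 1,
      (1/2) * (z * deriv G z + m) * (z * deriv G z + m + 1)
        + ((1+z) / (2*(1-z))) * G z - m = 0) :
    ∀ l : ℕ, 1 ≤ l →
      (∑' i : ℕ, ρ (i + l))
        + (1/2) * (∑ i ∈ Finset.Ico 1 l, (i:ℝ) * ((l:ℝ) - i) * ρ i * ρ (l-i))
        - ((m + 1/2) * l + 1/2) * ρ l = 0 :=
  stmt_18_general m G ρ hser hmass heq
end
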